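/- arXiv:0807.1523 — 5 statements merged into one kernel-verified Lean document; each statement's English description precedes it below -/
import Mathlib

section
/- Let V ∈ ℂ^d be an eigenvector of Q, QV = μV with |μ| = ρ ≥ 0, let S_K be the running sum associated with C = V, and assume hypothesis (jsr_λ). If ρ < λ then sup_{x∈[0,1]} ‖S_K(x)‖ = O(λ^K) as K → ∞; if ρ = λ then sup_{x∈[0,1]} ‖S_K(x)‖ = O(K λ^K) as K → ∞. -/
/-!
Reading the first digit gives `S_{K+1}(x) = ∑ r, A_r S_K(B x - r)`. Since `S_K(y) = 0` for `y < 0`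
and `S_K(y) = Q^K V = μ^K V` for `y ≥ 1`, at most one of the `B` terms is a genuine running sum.
Unrolling the recursion along the digits of `x` bounds `‖S_K(x)‖` by
`C ‖V‖ (B λ ∑_{i<K} ρ^i λ^(K-1-i) + λ^K)`, where `‖A_w‖ ≤ C λ^|w|` for all words, obtained from
(jsr_λ) by cutting words into blocks of length `T`. The geometric sum is at most `λ^K / (λ - ρ)` when
`ρ < λ` and equals `K λ^(K-1)` when `ρ = λ`.
-/

open scoped Classical BigOperators
open Filter Asymptotics

attribute [local instance] Matrix.linftyOpNormedAddCommGroup Matrix.linftyOpNormedRing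

noncomputable section

/-- `A_w = A_{w_1} ⋯ A_{w_K}` for a word `w` of length `K` over the digit alphabet. -/
def wordProd {B d : ℕ} (A : Fin B → Matrix (Fin d) (Fin d) ℂ) {K : ℕ}
    (w : Fin K → Fin B) : Matrix (Fin d) (Fin d) ℂ :=
  ((List.ofFn w).map A).prod

/-- `(0.w)_B = Σ_{k=1}^K w_k B^{-k}`. -/
def wordVal {B K : ℕ} (w : Fin K → Fin B) : ℝ :=
  ∑ k : Fin K, (w k : ℝ) / (B : ℝ) ^ ((k : ℕ) + 1)

/-- The running sum `S_K(x) = Σ_{|w|=K, (0.w)_B ≤ x} A_w C`. -/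
def runSum {B d : ℕ} (A : Fin B → Matrix (Fin d) (Fin d) ℂ) (C : Fin d → ℂ)
    (K : ℕ) (x : ℝ) : Fin d → ℂ :=
  ∑ w : Fin K → Fin B, if wordVal w ≤ x then (wordProd A w).mulVec C else 0

/-- The basic dilation equation for data `ρ, ω, V`. -/
def DilationEq {B d : ℕ} (A : Fin B → Matrix (Fin d) (Fin d) ℂ) (ρ : ℝ) (ω : ℂ)
    (V : Fin d → ℂ) (Φ : ℝ → Fin d → ℂ) : Prop :=
  Φ 0 = 0 ∧ Φ 1 = V ∧
    ∀ r : Fin B, ∀ x : ℝ, (r : ℝ) / B ≤ x → x < ((r : ℝ) + 1) / B →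
      Φ x = ((ρ : ℂ) * ω)⁻¹ •
        ((∑ s ∈ Finset.univ.filter fun s : Fin B => s < r, (A s).mulVec V) +
          (A r).mulVec (Φ (B * x - r)))

section WordNorms

variable {R ι : Type*} [SeminormedRing R] (A : ι → R)

theorem norm_prod_map_le_pow {N : ℝ} (hN : ∀ i, ‖A i‖ ≤ N) (l : List ι) :
    ‖(l.map A).prod‖ ≤ ‖(1 : R)‖ * N ^ l.length := by
  induction l with
  | nil => simp
  | cons a l ih =>
    rw [List.map_cons, List.prod_cons, List.length_cons, pow_succ']
    calc ‖A a * (l.map A).prod‖ ≤ ‖A a‖ * ‖(l.map A).prod‖ := norm_mul_le _ _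
      _ ≤ N * (‖(1 : R)‖ * N ^ l.length) := by
        gcongr
        · exact (norm_nonneg _).trans (hN a)
        · exact hN a
      _ = ‖(1 : R)‖ * (N * N ^ l.length) := by ring

theorem exists_norm_prod_map_le_mul_pow [Finite ι] {lam : ℝ} (hlam : 0 < lam) {T : ℕ}
    (hT : 0 < T) (h : ∀ l : List ι, l.length = T → ‖(l.map A).prod‖ ≤ lam ^ T) :
    ∃ C, ∀ l : List ι, ‖(l.map A).prod‖ ≤ C * lam ^ l.length := by
  obtain ⟨N, hN⟩ := (Set.finite_range fun i => ‖A i‖).bddAbove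
  set v := max 1 (N / lam)
  have hA : ∀ i, ‖A i‖ ≤ v * lam := fun i =>
    (hN (Set.mem_range_self i)).trans ((div_le_iff₀ hlam).mp (le_max_right _ _))
  refine ⟨‖(1 : R)‖ * v ^ T, fun l => ?_⟩
  induction hn : l.length using Nat.strong_induction_on generalizing l with
  | _ n ih =>
    rcases lt_or_ge n T with hnT | hnT
    · calc ‖(l.map A).prod‖ ≤ ‖(1 : R)‖ * (v * lam) ^ n := hn ▸ norm_prod_map_le_pow A hA l
        _ ≤ ‖(1 : R)‖ * v ^ T * lam ^ n := by
          rw [mul_pow, ← mul_assoc]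
          gcongr
          exact le_max_left _ _
    · have hdrop : (l.drop T).length = n - T := by rw [List.length_drop, hn]
      calc ‖(l.map A).prod‖ = ‖((l.take T).map A).prod * ((l.drop T).map A).prod‖ := by
            rw [← List.prod_append, ← List.map_append, List.take_append_drop]
        _ ≤ lam ^ T * (‖(1 : R)‖ * v ^ T * lam ^ (n - T)) :=
          (norm_mul_le _ _).trans (mul_le_mul (h _ (by simp [hn, hnT]))
            (ih _ (by omega) _ hdrop) (norm_nonneg _) (by positivity))
        _ = ‖(1 : R)‖ * v ^ T * lam ^ n := by
          rw [mul_left_comm, ← pow_add, Nat.add_sub_cancel' hnT]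

end WordNorms

theorem Fin.sum_ite_val_eq_le {M : Type*} [AddCommMonoid M] [PartialOrder M]
    [IsOrderedAddMonoid M] {B : ℕ} {P : M} (hP : 0 ≤ P) (n : ℕ) :
    ∑ r : Fin B, (if (r : ℕ) = n then P else 0) ≤ P := by
  by_cases hn : n < B
  · have hiff : ∀ r : Fin B, (r : ℕ) = n ↔ ⟨n, hn⟩ = r := fun r => by rw [Fin.ext_iff, eq_comm]
    simp only [hiff, Finset.sum_ite_eq, Finset.mem_univ, if_true, le_refl]
  · simp [show ∀ r : Fin B, (r : ℕ) ≠ n from fun r => by omega, hP]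

section RunningSums

open scoped Matrix

variable {B d : ℕ} (A : Fin B → Matrix (Fin d) (Fin d) ℂ)

theorem wordProd_cons {K : ℕ} (r : Fin B) (w : Fin K → Fin B) :
    wordProd A (Fin.cons r w) = A r * wordProd A w := by
  simp [wordProd, List.ofFn_succ]

theorem wordVal_nonneg {K : ℕ} (w : Fin K → Fin B) : 0 ≤ wordVal w :=
  Finset.sum_nonneg fun _ _ => by positivity

theorem wordVal_cons {K : ℕ} (r : Fin B) (w : Fin K → Fin B) :
    wordVal (Fin.cons r w) = ((r : ℝ) + wordVal w) / B := by
  have : (B : ℝ) ≠ 0 := by have := r.pos; positivity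
  simp only [wordVal, Fin.sum_univ_succ, Fin.cons_zero, Fin.cons_succ, Fin.val_zero,
    Fin.val_succ, add_div, Finset.sum_div, div_div, ← pow_succ]
  simp

theorem exists_norm_wordProd_le {lam : ℝ} (hlam : 0 < lam)
    (hjsr : ∃ T : ℕ, 1 ≤ T ∧ ∀ w : Fin T → Fin B, ‖wordProd A w‖ ≤ lam ^ T) :
    ∃ C, ∀ (n : ℕ) (w : Fin n → Fin B), ‖wordProd A w‖ ≤ C * lam ^ n := by
  obtain ⟨T, hT, hjsr⟩ := hjsr
  obtain ⟨C, hC⟩ := exists_norm_prod_map_le_mul_pow A hlam hT fun l hl => by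
    subst hl
    simpa [wordProd] using hjsr l.get
  exact ⟨C, fun n w => by simpa [wordProd] using hC (List.ofFn w)⟩

variable (V : Fin d → ℂ)

theorem runSum_zero (x : ℝ) : runSum A V 0 x = if 0 ≤ x then V else 0 := by
  simp [runSum, wordVal, wordProd]

theorem runSum_succ (K : ℕ) (x : ℝ) :
    runSum A V (K + 1) x = ∑ r, A r *ᵥ runSum A V K (B * x - r) := by
  rw [runSum, ← (Fin.consEquiv fun _ => Fin B).sum_comp, Fintype.sum_prod_type]
  refine Finset.sum_congr rfl fun r _ => ?_
  rw [runSum, Matrix.mulVec_sum]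
  refine Finset.sum_congr rfl fun w _ => ?_
  have hB : (0 : ℝ) < B := by exact_mod_cast r.pos
  have hval : wordVal (Fin.cons r w : Fin (K + 1) → Fin B) ≤ x ↔ wordVal w ≤ B * x - r := by
    rw [wordVal_cons, div_le_iff₀ hB]
    constructor <;> intro <;> linarith
  change (if wordVal (Fin.cons r w : Fin (K + 1) → Fin B) ≤ x then
    wordProd A (Fin.cons r w : Fin (K + 1) → Fin B) *ᵥ V else 0) = _
  simp only [hval, wordProd_cons]
  split_ifs <;> simp [Matrix.mulVec_mulVec]

theorem runSum_of_neg (K : ℕ) {x : ℝ} (hx : x < 0) : runSum A V K x = 0 :=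
  Finset.sum_eq_zero fun w _ => if_neg fun h => (wordVal_nonneg w).not_gt (h.trans_lt hx)

theorem runSum_of_one_le {μ : ℂ} (hV : (∑ r, A r) *ᵥ V = μ • V) (K : ℕ) {x : ℝ} (hx : 1 ≤ x) :
    runSum A V K x = μ ^ K • V := by
  induction K generalizing x with
  | zero => rw [runSum_zero, if_pos (by linarith), pow_zero, one_smul]
  | succ K ih =>
    have hshift : ∀ r : Fin B, 1 ≤ B * x - r := fun r => by
      have : (r : ℝ) + 1 ≤ B := by exact_mod_cast r.isLt
      nlinarith
    calc runSum A V (K + 1) x = ∑ r, A r *ᵥ (μ ^ K • V) := by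
          rw [runSum_succ]
          exact Finset.sum_congr rfl fun r _ => by rw [ih (hshift r)]
      _ = μ ^ (K + 1) • V := by
          rw [← Matrix.sum_mulVec, Matrix.mulVec_smul, hV, smul_smul, pow_succ]

theorem norm_mulVec_runSum_le_of_lt_zero_or_one_le {μ : ℂ} (hV : (∑ r, A r) *ᵥ V = μ • V)
    (K : ℕ) {M : Matrix (Fin d) (Fin d) ℂ} {c : ℝ} (hM : ‖M‖ ≤ c) {y : ℝ} (hy : y < 0 ∨ 1 ≤ y) :
    ‖M *ᵥ runSum A V K y‖ ≤ c * ‖V‖ * ‖μ‖ ^ K := by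
  have hc : 0 ≤ c := (norm_nonneg M).trans hM
  rcases hy with hneg | hge
  · rw [runSum_of_neg A V K hneg, Matrix.mulVec_zero, norm_zero]
    positivity
  · rw [runSum_of_one_le A V hV K hge, Matrix.mulVec_smul, norm_smul, norm_pow, mul_comm]
    gcongr
    exact (Matrix.linfty_opNorm_mulVec M V).trans (by gcongr)

theorem norm_le_of_forall_norm_mul_wordProd_le {M : Matrix (Fin d) (Fin d) ℂ} {c lam : ℝ}
    (hM : ∀ (n : ℕ) (w : Fin n → Fin B), ‖M * wordProd A w‖ ≤ c * lam ^ n) : ‖M‖ ≤ c := by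
  simpa [wordProd] using hM 0 Fin.elim0

/-- `M` stands for the product `A_u` of the digits of `x` read so far. -/
theorem norm_mulVec_runSum_le {μ : ℂ} (hV : (∑ r, A r) *ᵥ V = μ • V) {lam : ℝ} (hlam : 0 ≤ lam)
    (K : ℕ) {M : Matrix (Fin d) (Fin d) ℂ} {c : ℝ}
    (hM : ∀ (n : ℕ) (w : Fin n → Fin B), ‖M * wordProd A w‖ ≤ c * lam ^ n) (x : ℝ) :
    ‖M *ᵥ runSum A V K x‖ ≤
      c * ‖V‖ * (B * lam * ∑ i ∈ Finset.range K, ‖μ‖ ^ i * lam ^ (K - 1 - i) + lam ^ K) := by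
  have hc : 0 ≤ c := (norm_nonneg M).trans (norm_le_of_forall_norm_mul_wordProd_le A hM)
  induction K generalizing M c x with
  | zero =>
    rw [runSum_zero]
    split_ifs
    · simpa using (Matrix.linfty_opNorm_mulVec M V).trans
        (mul_le_mul_of_nonneg_right (norm_le_of_forall_norm_mul_wordProd_le A hM) (norm_nonneg V))
    · simpa using mul_nonneg hc (norm_nonneg V)
  | succ K ih =>
    have hMr : ∀ r (n : ℕ) (w : Fin n → Fin B), ‖M * A r * wordProd A w‖ ≤ c * lam * lam ^ n :=
      fun r n w => by simpa [mul_assoc, ← wordProd_cons, pow_succ'] using hM (n + 1) (Fin.cons r w)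
    set G := ∑ i ∈ Finset.range K, ‖μ‖ ^ i * lam ^ (K - 1 - i)
    set F := c * lam * ‖V‖ * ‖μ‖ ^ K
    set P := c * lam * ‖V‖ * (B * lam * G + lam ^ K)
    have hF : 0 ≤ F := by positivity
    have hP : 0 ≤ P := by positivity
    set n := ⌊(B : ℝ) * x⌋₊
    have hterm : ∀ r : Fin B, ‖(M * A r) *ᵥ runSum A V K (B * x - r)‖ ≤
        F + if (r : ℕ) = n then P else 0 := by
      intro r
      by_cases hy : B * x - r < 0 ∨ 1 ≤ B * x - r
      · have hite : 0 ≤ if (r : ℕ) = n then P else 0 := by split_ifs <;> simp [hP]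
        have := norm_mulVec_runSum_le_of_lt_zero_or_one_le A V hV K
          (norm_le_of_forall_norm_mul_wordProd_le A (hMr r)) hy
        linarith
      · rw [not_or, not_lt, not_le] at hy
        have hr : (r : ℕ) = n := by
          have hr0 : (0 : ℝ) ≤ r := Nat.cast_nonneg _
          exact ((Nat.floor_eq_iff (by linarith)).mpr ⟨by linarith, by linarith⟩).symm
        rw [if_pos hr]
        linarith [ih (hMr r) (B * x - r) (mul_nonneg hc hlam)]
    calc ‖M *ᵥ runSum A V (K + 1) x‖ = ‖∑ r, (M * A r) *ᵥ runSum A V K (B * x - r)‖ := by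
          simp only [runSum_succ, Matrix.mulVec_sum, Matrix.mulVec_mulVec]
      _ ≤ ∑ r, ‖(M * A r) *ᵥ runSum A V K (B * x - r)‖ := norm_sum_le _ _
      _ ≤ ∑ r : Fin B, (F + if (r : ℕ) = n then P else 0) := Finset.sum_le_sum fun r _ => hterm r
      _ ≤ B * F + P := by
          rw [Finset.sum_add_distrib, Finset.sum_const, Finset.card_univ, Fintype.card_fin,
            nsmul_eq_mul]
          gcongr
          exact Fin.sum_ite_val_eq_le hP n
      _ = _ := by
          rw [Nat.add_sub_cancel, geom_sum₂_succ_eq]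
          ring

theorem exists_iSup_norm_runSum_le {μ : ℂ} (hV : (∑ r, A r) *ᵥ V = μ • V) {lam : ℝ}
    (hlam : 0 < lam) (hjsr : ∃ T : ℕ, 1 ≤ T ∧ ∀ w : Fin T → Fin B, ‖wordProd A w‖ ≤ lam ^ T) :
    ∃ C, 0 ≤ C ∧ ∀ K, ‖⨆ x : Set.Icc (0 : ℝ) 1, ‖runSum A V K x‖‖ ≤
      C * (B * lam * ∑ i ∈ Finset.range K, ‖μ‖ ^ i * lam ^ (K - 1 - i) + lam ^ K) := by
  obtain ⟨C, hC⟩ := exists_norm_wordProd_le A hlam hjsr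
  have hC' : ∀ (n : ℕ) (w : Fin n → Fin B), ‖1 * wordProd A w‖ ≤ C * lam ^ n := by
    simpa using hC
  refine ⟨C * ‖V‖, mul_nonneg ((norm_nonneg _).trans
    (norm_le_of_forall_norm_mul_wordProd_le A hC')) (norm_nonneg V), fun K => ?_⟩
  rw [Real.norm_of_nonneg (Real.iSup_nonneg fun _ => norm_nonneg _)]
  exact ciSup_le fun x => by simpa using norm_mulVec_runSum_le A V hV hlam.le K hC' x

end RunningSums

theorem geom_sum₂_le_div_sub {x y : ℝ} (hx : 0 ≤ x) (hxy : x < y) (n : ℕ) :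
    ∑ i ∈ Finset.range n, x ^ i * y ^ (n - 1 - i) ≤ y ^ n / (y - x) := by
  rw [le_div_iff₀ (by linarith), ← neg_sub, mul_neg, geom_sum₂_mul]
  linarith [pow_nonneg hx n]

theorem runSum_noise_eigenvector_general (B d : ℕ)
    (A : Fin B → Matrix (Fin d) (Fin d) ℂ)
    (μ : ℂ) (ρ : ℝ) (hρ : ‖μ‖ = ρ)
    (V : Fin d → ℂ) (hV : (∑ r, A r).mulVec V = μ • V)
    -- hypothesis (jsr_λ)
    (lam : ℝ) (hlam : 0 < lam)
    (hjsr : ∃ T : ℕ, 1 ≤ T ∧ ∀ w : Fin T → Fin B, ‖wordProd A w‖ ≤ lam ^ T) :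
    (ρ < lam →
      (fun K : ℕ => ⨆ x : Set.Icc (0:ℝ) 1, ‖runSum A V K x‖) =O[atTop]
        fun K => lam ^ K) ∧
    (ρ = lam →
      (fun K : ℕ => ⨆ x : Set.Icc (0:ℝ) 1, ‖runSum A V K x‖) =O[atTop]
        fun K => (K : ℝ) * lam ^ K) := by
  subst hρ
  obtain ⟨C, hC, hS⟩ := exists_iSup_norm_runSum_le A V hV hlam hjsr
  constructor
  · intro hlt
    refine IsBigO.of_bound (C * (B * lam / (lam - ‖μ‖) + 1)) (.of_forall fun K => ?_)
    calc _ ≤ _ := hS K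
      _ ≤ C * (B * lam * (lam ^ K / (lam - ‖μ‖)) + lam ^ K) := by
        gcongr
        exact geom_sum₂_le_div_sub (norm_nonneg μ) hlt K
      _ = _ := by rw [Real.norm_of_nonneg (by positivity)]; ring
  · rintro rfl
    refine IsBigO.of_bound (C * (B + 1)) ((eventually_ge_atTop 1).mono fun K hK => ?_)
    have hgeom : ‖μ‖ * ∑ i ∈ Finset.range K, ‖μ‖ ^ i * ‖μ‖ ^ (K - 1 - i) = K * ‖μ‖ ^ K := by
      rw [geom_sum₂_self, mul_left_comm, ← pow_succ', Nat.sub_add_cancel hK]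
    calc _ ≤ _ := hS K
      _ = C * (B * (K * ‖μ‖ ^ K) + ‖μ‖ ^ K) := by rw [mul_assoc (B : ℝ), hgeom]
      _ ≤ C * (B * (K * ‖μ‖ ^ K) + K * ‖μ‖ ^ K) := by
        gcongr
        exact le_mul_of_one_le_left (by positivity) (by exact_mod_cast hK)
      _ = _ := by rw [Real.norm_of_nonneg (by positivity)]; ring

/-- noise, eigenvector case: if `QV = μV` with `|μ| = ρ` and (jsr_λ) holds,
then the running sums associated with `V` are `O(λ^K)` if `ρ < λ` and `O(K λ^K)` if `ρ = λ`. -/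
theorem runSum_noise_eigenvector (B d : ℕ) (hB : 2 ≤ B) (hd : 1 ≤ d)
    (A : Fin B → Matrix (Fin d) (Fin d) ℂ)
    (μ : ℂ) (ρ : ℝ) (hρ : ‖μ‖ = ρ)
    (V : Fin d → ℂ) (hVne : V ≠ 0) (hV : (∑ r, A r).mulVec V = μ • V)
    -- hypothesis (jsr_λ)
    (lam : ℝ) (hlam : 0 < lam)
    (hjsr : ∃ T : ℕ, 1 ≤ T ∧ ∀ w : Fin T → Fin B, ‖wordProd A w‖ ≤ lam ^ T) :
    (ρ < lam →
      (fun K : ℕ => ⨆ x : Set.Icc (0:ℝ) 1, ‖runSum A V K x‖) =O[atTop]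
        fun K => lam ^ K) ∧
    (ρ = lam →
      (fun K : ℕ => ⨆ x : Set.Icc (0:ℝ) 1, ‖runSum A V K x‖) =O[atTop]
        fun K => (K : ℝ) * lam ^ K) :=
  runSum_noise_eigenvector_general B d A μ ρ hρ V hV lam hlam hjsr
end
end

section
/- Under hypothesis (gev) with eigenvalue α = ρω ≠ 0, the following exact identities hold for every K ∈ ℕ with K ≥ ν − 1 (integer powers of α taken in ℂ). If α ≠ 1: (I_d − A_0) Σ_{k=0}^{K} Q^k V^(ν−1) = binom(K,ν−1) (α^{K−ν+2}/(α−1)) (I_d − A_0)V^(0) + Σ_{ℓ=0}^{ν−2} binom(K,ℓ) α^{K−ℓ} [ (α/(α−1)) (I_d − A_0)V^(ν−ℓ−1) + Σ_{j=ℓ+1}^{ν−1} ((−1)^{j−ℓ}/(α−1)^{j−ℓ+1}) (I_d − A_0)V^(ν−j−1) ] + Σ_{ℓ=0}^{ν−1} (−1)^{ℓ+1} (α−1)^{−(ℓ+1)} (I_d − A_0)V^(ν−ℓ−1). If α = 1: (I_d − A_0) Σ_{k=0}^{K} Q^k V^(ν−1) = binom(K,ν) (I_d − A_0)V^(0) +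 Σ_{ℓ=1}^{ν−1} binom(K,ℓ) (I_d − A_0)(V^(ν−ℓ) + V^(ν−ℓ−1)) + (I_d − A_0)V^(ν−1). -/
open scoped Classical BigOperators
open Filter Asymptotics

attribute [local instance] Matrix.linftyOpNormedAddCommGroup Matrix.linftyOpNormedRing

noncomputable section

section GLSJaux
open Finset

namespace GLSJ

noncomputable def S (α : ℂ) (j K : ℕ) : ℂ :=
  ∑ k ∈ range (K+1), (Nat.choose k j : ℂ) * α ^ ((k:ℤ) - (j:ℤ))

lemma S_rec {α : ℂ} (hα0 : α ≠ 0) (j K : ℕ) :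
    S α j K + (α - 1) * S α (j+1) K
      = (Nat.choose (K+1) (j+1) : ℂ) * α ^ ((K:ℤ) - (j:ℤ)) := by
  induction K with
  | zero =>
      cases j with
      | zero => simp [S]
      | succ m => simp [S, Nat.choose]
  | succ K ih =>
      have e1 : ((K+1:ℕ):ℤ) - (j:ℤ) = ((K:ℤ) - (j:ℤ)) + 1 := by push_cast; ring
      have e2 : ((K+1:ℕ):ℤ) - ((j+1:ℕ):ℤ) = (K:ℤ) - (j:ℤ) := by push_cast; ring
      have h1 : S α j (K+1) = S α j K + (Nat.choose (K+1) j : ℂ) * α ^ (((K:ℤ)-(j:ℤ))+1) := by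
        rw [S, sum_range_succ, ← e1]; rfl
      have h2 : S α (j+1) (K+1) = S α (j+1) K + (Nat.choose (K+1) (j+1) : ℂ) * α ^ ((K:ℤ)-(j:ℤ)) := by
        rw [S, sum_range_succ, ← e2]; rfl
      rw [h1, h2, show ((K+1+1:ℕ)).choose (j+1) = (K+1).choose j + (K+1).choose (j+1) from
        Nat.choose_succ_succ _ _]
      rw [show ((K+1:ℕ):ℤ) - (j:ℤ) = ((K:ℤ)-(j:ℤ)) + 1 from e1]
      rw [zpow_add_one₀ hα0]
      push_cast
      linear_combination ih

lemma S_one (j K : ℕ) : S 1 j K = (Nat.choose (K+1) (j+1) : ℂ) := by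
  induction K with
  | zero =>
      cases j with
      | zero => simp [S]
      | succ m => simp [S, Nat.choose]
  | succ K ih =>
      rw [S, sum_range_succ, ← S, ih, one_zpow,
        show ((K+1+1:ℕ)).choose (j+1) = (K+1).choose j + (K+1).choose (j+1) from
          Nat.choose_succ_succ _ _]
      push_cast; ring

noncomputable def F (α : ℂ) (j K : ℕ) : ℂ :=
  (Nat.choose K j : ℂ) * α ^ ((K:ℤ) - (j:ℤ)) * (α / (α - 1))
  + (∑ l ∈ range j, (Nat.choose K l : ℂ) * α ^ ((K:ℤ) - (l:ℤ)) *
      ((-1 : ℂ) ^ (j - l) * ((α - 1) ^ (j - l + 1))⁻¹))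
  + (-1 : ℂ) ^ (j+1) * ((α - 1) ^ (j+1))⁻¹

noncomputable def G (α : ℂ) (j K : ℕ) : ℂ :=
  (Nat.choose K j : ℂ) * α ^ ((K:ℤ) - (j:ℤ)) * α * (α - 1) ^ j
  + (∑ l ∈ range j, (Nat.choose K l : ℂ) * α ^ ((K:ℤ) - (l:ℤ)) *
      ((-1 : ℂ) ^ (j - l) * (α - 1) ^ l))
  + (-1 : ℂ) ^ (j+1)

lemma S_G {α : ℂ} (hα0 : α ≠ 0) (hα1 : α ≠ 1) (j K : ℕ) :
    (α - 1) ^ (j+1) * S α j K = G α j K := by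
  induction j with
  | zero =>
      have h : S α 0 K = ∑ k ∈ range (K+1), α ^ k := by
        unfold S
        refine sum_congr rfl fun k _ => ?_
        simp [zpow_natCast]
      rw [h, pow_one, mul_comm, geom_sum_mul]
      unfold G
      simp only [range_zero, sum_empty, Nat.choose_zero_right, Nat.cast_one, add_zero,
        Nat.cast_zero, sub_zero, zpow_natCast, pow_zero, pow_one, zero_add]
      ring
  | succ j ih =>
      have hrec := S_rec hα0 j K
      have hx : α ^ ((K:ℤ) - (j:ℤ)) = α ^ ((K:ℤ) - ((j:ℤ)+1)) * α := by
        rw [← zpow_add_one₀ hα0]; congr 1; ring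
      have expand : G α (j+1) K
          = (Nat.choose K (j+1) : ℂ) * α ^ ((K:ℤ) - ((j+1:ℕ):ℤ)) * α * (α - 1) ^ (j+1)
            + (-(∑ l ∈ range j, (Nat.choose K l : ℂ) * α ^ ((K:ℤ) - (l:ℤ)) *
                ((-1 : ℂ) ^ (j - l) * (α - 1) ^ l))
               - (Nat.choose K j : ℂ) * α ^ ((K:ℤ) - (j:ℤ)) * (α - 1) ^ j)
            + -(-1 : ℂ) ^ (j+1) := by
        unfold G
        rw [sum_range_succ, show j + 1 - j = 1 from by omega]
        have hs : ∑ l ∈ range j, (Nat.choose K l : ℂ) * α ^ ((K:ℤ) - (l:ℤ)) *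
              ((-1 : ℂ) ^ (j + 1 - l) * (α - 1) ^ l)
            = ∑ l ∈ range j, -((Nat.choose K l : ℂ) * α ^ ((K:ℤ) - (l:ℤ)) *
              ((-1 : ℂ) ^ (j - l) * (α - 1) ^ l)) := by
          refine sum_congr rfl fun l hl => ?_
          have hlj : l < j := mem_range.mp hl
          rw [show j + 1 - l = (j - l) + 1 from by omega, pow_succ]
          ring
        rw [hs, Finset.sum_neg_distrib]
        ring
      rw [expand]
      have h' : (α - 1) ^ (j + 1 + 1) * S α (j+1) K
          = (α - 1) ^ (j+1) * ((α - 1) * S α (j+1) K) := by ring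
      rw [h', show (α - 1) * S α (j+1) K
          = (Nat.choose (K+1) (j+1) : ℂ) * α ^ ((K:ℤ) - (j:ℤ)) - S α j K from by
            linear_combination hrec]
      rw [mul_sub, ih]
      unfold G
      rw [show Nat.choose (K+1) (j+1) = Nat.choose K j + Nat.choose K (j+1) from
        Nat.choose_succ_succ _ _,
        show ((K:ℤ) - ((j+1:ℕ):ℤ)) = (K:ℤ) - ((j:ℤ)+1) from by push_cast; ring, hx]
      push_cast
      ring

lemma S_closed {α : ℂ} (hα0 : α ≠ 0) (hα1 : α ≠ 1) (j K : ℕ) :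
    S α j K = F α j K := by
  have hm1 : α - 1 ≠ 0 := sub_ne_zero.mpr hα1
  have hp : (α - 1) ^ (j+1) ≠ 0 := pow_ne_zero _ hm1
  refine mul_left_cancel₀ hp ?_
  rw [S_G hα0 hα1]
  unfold F G
  rw [mul_add, mul_add, Finset.mul_sum]
  congr 1
  · congr 1
    · field_simp; ring
    · refine sum_congr rfl fun l hl => ?_
      have hlj : l < j := mem_range.mp hl
      rw [show j + 1 = (j - l + 1) + l from by omega, pow_add]
      have h2 : (α - 1) ^ (j - l + 1) ≠ 0 := pow_ne_zero _ hm1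
      field_simp
  · field_simp

lemma pow_mulVec_U {d : ℕ} (Q : Matrix (Fin d) (Fin d) ℂ) (α : ℂ) (hα0 : α ≠ 0)
    (U : ℕ → Fin d → ℂ) (hU : ∀ i, Q.mulVec (U i) = α • U i + U (i+1)) :
    ∀ k i, (Q ^ k).mulVec (U i)
      = ∑ j ∈ range (k+1), ((Nat.choose k j : ℂ) * α ^ ((k:ℤ) - (j:ℤ))) • U (i+j) := by
  intro k
  induction k with
  | zero => intro i; simp
  | succ k ih =>
      intro i
      set c : ℕ → ℂ := fun j => (Nat.choose k j : ℂ) * α ^ ((k:ℤ) - (j:ℤ)) with hc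
      set c' : ℕ → ℂ := fun j => (Nat.choose (k+1) j : ℂ) * α ^ (((k+1:ℕ):ℤ) - (j:ℤ)) with hc'
      have step1 : (Q ^ (k+1)).mulVec (U i)
          = ∑ j ∈ range (k+1), c j • (α • U (i+j) + U (i+j+1)) := by
        rw [pow_succ', ← Matrix.mulVec_mulVec, ih i]
        simp only [← Matrix.mulVecLin_apply, map_sum, map_smul]
        exact sum_congr rfl fun j _ => by rw [Matrix.mulVecLin_apply, hU]
      rw [step1]
      have step2 : ∑ j ∈ range (k+1), c j • (α • U (i+j) + U (i+j+1))
          = (∑ j ∈ range (k+1), (α * c j) • U (i+j))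
            + ∑ j ∈ range (k+1), c j • U (i+j+1) := by
        rw [← sum_add_distrib]
        refine sum_congr rfl fun j _ => ?_
        rw [smul_add, smul_smul, mul_comm]
      rw [step2]
      have e1 : ∑ j ∈ range (k+1), (α * c j) • U (i+j)
          = (∑ j ∈ range k, (α * c (j+1)) • U (i+j+1)) + (α * c 0) • U i := by
        rw [sum_range_succ']; rfl
      have e2 : ∑ j ∈ range k, (α * c (j+1)) • U (i+j+1)
          = ∑ j ∈ range (k+1), (α * c (j+1)) • U (i+j+1) := by
        rw [sum_range_succ, hc]
        simp [Nat.choose_succ_self]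
      have e3 : ∑ j ∈ range (k+1+1), c' j • U (i+j)
          = (∑ j ∈ range (k+1), c' (j+1) • U (i+j+1)) + c' 0 • U i := by
        rw [sum_range_succ']; rfl
      rw [e1, e2, e3]
      have hc0 : α * c 0 = c' 0 := by
        simp only [hc, hc']
        simp only [Nat.choose_zero_right, Nat.cast_one, one_mul, Nat.cast_zero, sub_zero]
        rw [show ((k+1:ℕ):ℤ) = (k:ℤ) + 1 from by push_cast; ring, zpow_add_one₀ hα0]
        ring
      rw [add_assoc, add_comm ((α * c 0) • U i), ← add_assoc, hc0]
      congr 1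
      rw [← sum_add_distrib]
      refine sum_congr rfl fun j _ => ?_
      rw [← add_smul]
      congr 1
      simp only [hc, hc']
      rw [show Nat.choose (k+1) (j+1) = Nat.choose k j + Nat.choose k (j+1) from
        Nat.choose_succ_succ _ _,
        show ((k+1:ℕ):ℤ) - ((j+1:ℕ):ℤ) = (k:ℤ) - (j:ℤ) from by push_cast; ring,
        show (k:ℤ) - (j:ℤ) = ((k:ℤ) - ((j+1:ℕ):ℤ)) + 1 from by push_cast; ring,
        zpow_add_one₀ hα0]
      push_cast
      ring

lemma sum_pow_mulVec {d : ℕ} (Q : Matrix (Fin d) (Fin d) ℂ) (α : ℂ) (hα0 : α ≠ 0)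
    (U : ℕ → Fin d → ℂ) (hU : ∀ i, Q.mulVec (U i) = α • U i + U (i+1))
    (ν : ℕ) (hU0 : ∀ j, ν ≤ j → U j = 0) (K : ℕ) :
    ∑ k ∈ range (K+1), (Q ^ k).mulVec (U 0)
      = ∑ j ∈ range ν, (S α j K) • U j := by
  have hk : ∀ k, (Q ^ k).mulVec (U 0)
      = ∑ j ∈ range ν, ((Nat.choose k j : ℂ) * α ^ ((k:ℤ) - (j:ℤ))) • U j := by
    intro k
    rw [pow_mulVec_U Q α hα0 U hU k 0]
    have h1 : ∑ j ∈ range (k+1), ((Nat.choose k j : ℂ) * α ^ ((k:ℤ) - (j:ℤ))) • U (0+j)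
        = ∑ j ∈ range (max (k+1) ν), ((Nat.choose k j : ℂ) * α ^ ((k:ℤ) - (j:ℤ))) • U j := by
      rw [show (fun j => ((Nat.choose k j : ℂ) * α ^ ((k:ℤ) - (j:ℤ))) • U (0+j))
          = (fun j => ((Nat.choose k j : ℂ) * α ^ ((k:ℤ) - (j:ℤ))) • U j) from by
        funext j; rw [Nat.zero_add]]
      refine Finset.sum_subset (by intro x hx; simp at hx ⊢; omega) ?_
      intro x hx hx2
      simp only [mem_range] at hx hx2
      have h0 : Nat.choose k x = 0 := Nat.choose_eq_zero_of_lt (by omega)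
      simp [h0]
    have h2 : ∑ j ∈ range ν, ((Nat.choose k j : ℂ) * α ^ ((k:ℤ) - (j:ℤ))) • U j
        = ∑ j ∈ range (max (k+1) ν), ((Nat.choose k j : ℂ) * α ^ ((k:ℤ) - (j:ℤ))) • U j := by
      refine Finset.sum_subset (by intro x hx; simp at hx ⊢; omega) ?_
      intro x hx hx2
      simp only [mem_range] at hx hx2
      rw [hU0 x (by omega), smul_zero]
    rw [h1, ← h2]
  calc ∑ k ∈ range (K+1), (Q ^ k).mulVec (U 0)
      = ∑ k ∈ range (K+1), ∑ j ∈ range ν,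
          ((Nat.choose k j : ℂ) * α ^ ((k:ℤ) - (j:ℤ))) • U j :=
        sum_congr rfl fun k _ => hk k
    _ = ∑ j ∈ range ν, ∑ k ∈ range (K+1),
          ((Nat.choose k j : ℂ) * α ^ ((k:ℤ) - (j:ℤ))) • U j := Finset.sum_comm
    _ = ∑ j ∈ range ν, (S α j K) • U j := by
        refine sum_congr rfl fun j _ => ?_
        rw [S, Finset.sum_smul]

lemma tri {M : Type*} [AddCommMonoid M] (ν : ℕ) (g : ℕ → ℕ → M) :
    ∑ j ∈ range ν, ∑ l ∈ range j, g l j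
      = ∑ l ∈ range (ν-1), ∑ i ∈ range (ν-1-l), g l (l+i+1) := by
  rw [Finset.sum_sigma', Finset.sum_sigma']
  refine Finset.sum_bij' (fun p _ => ⟨p.2, p.1 - p.2 - 1⟩) (fun p _ => ⟨p.1 + p.2 + 1, p.1⟩)
    ?_ ?_ ?_ ?_ ?_
  · rintro ⟨j, l⟩ hp
    simp only [mem_sigma, mem_range] at hp ⊢
    omega
  · rintro ⟨l, i⟩ hp
    simp only [mem_sigma, mem_range] at hp ⊢
    omega
  · rintro ⟨j, l⟩ hp
    simp only [mem_sigma, mem_range] at hp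
    simp only [Sigma.mk.inj_iff]
    exact ⟨by omega, heq_of_eq (by omega)⟩
  · rintro ⟨l, i⟩ hp
    simp only [mem_sigma, mem_range] at hp
    simp only [Sigma.mk.inj_iff]
    exact ⟨trivial, heq_of_eq (by omega)⟩
  · rintro ⟨j, l⟩ hp
    simp only [mem_sigma, mem_range] at hp
    have h' : l + (j - l - 1) + 1 = j := by omega
    rw [h']

end GLSJ

end GLSJaux

/-- exact summation identities for `(I - A_0) Σ_{k=0}^K Q^k V^(ν-1)` under
hypothesis (gev) with eigenvalue `α = ρω ≠ 0`, for `K ≥ ν - 1`, in the two cases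
`α ≠ 1` and `α = 1`. -/
theorem geometric_like_sum_jordan (B d ν : ℕ) (hB : 2 ≤ B) (hd : 1 ≤ d) (hν : 0 < ν)
    (A : Fin B → Matrix (Fin d) (Fin d) ℂ)
    (ρ : ℝ) (hρ : 0 ≤ ρ) (ω : ℂ) (hω : ‖ω‖ = 1)
    (α : ℂ) (hα : α = (ρ : ℂ) * ω) (hα0 : α ≠ 0)
    -- hypothesis (gev)
    (V : Fin ν → Fin d → ℂ) (hind : LinearIndependent ℂ V)
    (hV0 : (∑ r, A r).mulVec (V ⟨0, hν⟩) = α • V ⟨0, hν⟩)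
    (hVs : ∀ j : ℕ, ∀ hj : j + 1 < ν,
      (∑ r, A r).mulVec (V ⟨j + 1, hj⟩) = α • V ⟨j + 1, hj⟩ + V ⟨j, Nat.lt_of_succ_lt hj⟩) :
    ∀ K : ℕ, ν - 1 ≤ K →
      (α ≠ 1 →
        ((1 : Matrix (Fin d) (Fin d) ℂ) - A ⟨0, by omega⟩).mulVec
            (∑ k ∈ Finset.range (K + 1), ((∑ r, A r) ^ k).mulVec (V ⟨ν - 1, by omega⟩)) =
          ((Nat.choose K (ν - 1) : ℂ) * (α ^ ((K : ℤ) - (ν : ℤ) + 2) / (α - 1))) •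
              ((1 : Matrix (Fin d) (Fin d) ℂ) - A ⟨0, by omega⟩).mulVec (V ⟨0, hν⟩) +
            (∑ l ∈ Finset.range (ν - 1),
              ((Nat.choose K l : ℂ) * α ^ ((K : ℤ) - (l : ℤ))) •
                ((α / (α - 1)) •
                    ((1 : Matrix (Fin d) (Fin d) ℂ) - A ⟨0, by omega⟩).mulVec
                      (V ⟨ν - l - 1, by omega⟩) +
                  ∑ i ∈ Finset.range (ν - 1 - l),
                    (((-1 : ℂ) ^ (i + 1)) / (α - 1) ^ (i + 2)) •
                      ((1 : Matrix (Fin d) (Fin d) ℂ) - A ⟨0, by omega⟩).mulVec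
                        (V ⟨ν - l - i - 2, by omega⟩))) +
            ∑ l ∈ Finset.range ν,
              ((-1 : ℂ) ^ (l + 1) * ((α - 1) ^ (l + 1))⁻¹) •
                ((1 : Matrix (Fin d) (Fin d) ℂ) - A ⟨0, by omega⟩).mulVec
                  (V ⟨ν - l - 1, by omega⟩)) ∧
      (α = 1 →
        ((1 : Matrix (Fin d) (Fin d) ℂ) - A ⟨0, by omega⟩).mulVec
            (∑ k ∈ Finset.range (K + 1), ((∑ r, A r) ^ k).mulVec (V ⟨ν - 1, by omega⟩)) =
          (Nat.choose K ν : ℂ) •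
              ((1 : Matrix (Fin d) (Fin d) ℂ) - A ⟨0, by omega⟩).mulVec (V ⟨0, hν⟩) +
            (∑ l ∈ Finset.range (ν - 1),
              (Nat.choose K (l + 1) : ℂ) •
                ((1 : Matrix (Fin d) (Fin d) ℂ) - A ⟨0, by omega⟩).mulVec
                  (V ⟨ν - l - 1, by omega⟩ + V ⟨ν - l - 2, by omega⟩)) +
            ((1 : Matrix (Fin d) (Fin d) ℂ) - A ⟨0, by omega⟩).mulVec
              (V ⟨ν - 1, by omega⟩)) := by
  intro K hK
  classical
  open Finset GLSJ in
  set Q : Matrix (Fin d) (Fin d) ℂ := ∑ r, A r with hQ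
  set U : ℕ → Fin d → ℂ :=
    fun j => if h : j < ν then V ⟨ν - 1 - j, by omega⟩ else 0 with hUdef
  have hVcongr : ∀ (a b : ℕ) (ha : a < ν) (hb : b < ν), a = b → V ⟨a, ha⟩ = V ⟨b, hb⟩ := by
    intro a b ha hb h
    subst h
    rfl
  have hUeq : ∀ (j a : ℕ) (ha : a < ν), j < ν → a = ν - 1 - j → V ⟨a, ha⟩ = U j := by
    intro j a ha hj he
    simp only [hUdef, dif_pos hj]
    exact hVcongr _ _ _ _ he
  have hU0 : ∀ j, ν ≤ j → U j = 0 := by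
    intro j hj
    simp only [hUdef, dif_neg (by omega : ¬ j < ν)]
  have hU : ∀ i, Q.mulVec (U i) = α • U i + U (i+1) := by
    intro i
    rcases lt_trichotomy i (ν-1) with h | h | h
    · have hi : i < ν := by omega
      have hi1 : i + 1 < ν := by omega
      have hj1 : ν - 2 - i + 1 < ν := by omega
      have e1 : U i = V ⟨ν - 2 - i + 1, hj1⟩ := by
        simp only [hUdef, dif_pos hi]; exact hVcongr _ _ _ _ (by omega)
      have e2 : U (i+1) = V ⟨ν - 2 - i, Nat.lt_of_succ_lt hj1⟩ := by
        simp only [hUdef, dif_pos hi1]; exact hVcongr _ _ _ _ (by omega)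
      rw [e1, e2]
      exact hVs (ν - 2 - i) hj1
    · have hi : i < ν := by omega
      have e1 : U i = V ⟨0, hν⟩ := by
        simp only [hUdef, dif_pos hi]; exact hVcongr _ _ _ _ (by omega)
      have e2 : U (i+1) = 0 := hU0 _ (by omega)
      rw [e1, e2, hV0, add_zero]
    · rw [hU0 i (by omega), hU0 (i+1) (by omega), Matrix.mulVec_zero, smul_zero, add_zero]
  have hstart : ∀ (p : ν - 1 < ν), V ⟨ν - 1, p⟩ = U 0 := fun p =>
    hUeq 0 (ν-1) p (by omega) (by omega)
  have hsum0 : ∑ k ∈ Finset.range (K + 1), (Q ^ k).mulVec (V ⟨ν - 1, by omega⟩)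
      = ∑ j ∈ Finset.range ν, (S α j K) • U j := by
    rw [show ∑ k ∈ Finset.range (K + 1), (Q ^ k).mulVec (V ⟨ν - 1, by omega⟩)
        = ∑ k ∈ Finset.range (K + 1), (Q ^ k).mulVec (U 0) from
      Finset.sum_congr rfl fun k _ => by rw [hstart (by omega)]]
    exact sum_pow_mulVec Q α hα0 U hU ν hU0 K
  constructor
  · intro h1
    have hSF : ∑ j ∈ Finset.range ν, (GLSJ.S α j K) • U j
        = ∑ j ∈ Finset.range ν, (GLSJ.F α j K) • U j :=
      Finset.sum_congr rfl fun j _ => by rw [GLSJ.S_closed hα0 h1]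
    have hsplit : ∀ j ∈ Finset.range ν, GLSJ.F α j K • U j
        = ((Nat.choose K j : ℂ) * α ^ ((K:ℤ) - (j:ℤ)) * (α / (α - 1))) • U j
          + (∑ l ∈ Finset.range j, ((Nat.choose K l : ℂ) * α ^ ((K:ℤ) - (l:ℤ)) *
              ((-1 : ℂ) ^ (j - l) * ((α - 1) ^ (j - l + 1))⁻¹)) • U j)
          + ((-1 : ℂ) ^ (j+1) * ((α - 1) ^ (j+1))⁻¹) • U j := by
      intro j _
      rw [GLSJ.F, add_smul, add_smul, Finset.sum_smul]
    have hr : Finset.range ν = insert (ν-1) (Finset.range (ν-1)) := by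
      conv_lhs => rw [show ν = ν-1+1 from by omega]
      rw [Finset.range_add_one]
    have hSA : ∑ j ∈ Finset.range ν,
          ((Nat.choose K j : ℂ) * α ^ ((K:ℤ) - (j:ℤ)) * (α / (α - 1))) • U j
        = ((Nat.choose K (ν-1) : ℂ) * (α ^ ((K:ℤ) - (ν:ℤ) + 2) / (α - 1))) • U (ν-1)
          + ∑ l ∈ Finset.range (ν-1),
              ((Nat.choose K l : ℂ) * α ^ ((K:ℤ) - (l:ℤ))) • ((α / (α - 1)) • U l) := by
      rw [hr, Finset.sum_insert Finset.notMem_range_self]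
      congr 1
      · congr 1
        have hxx : α ^ ((K:ℤ) - (ν:ℤ) + 2) = α ^ ((K:ℤ) - (ν:ℤ) + 1) * α := by
          rw [← zpow_add_one₀ hα0]
          congr 1
          ring
        rw [show (K:ℤ) - ((ν-1:ℕ):ℤ) = ((K:ℤ) - (ν:ℤ) + 1) from by omega, hxx]
        generalize α ^ ((K:ℤ) - (ν:ℤ) + 1) = x
        ring
      · exact Finset.sum_congr rfl fun l _ => by rw [smul_smul]
    have hSB : ∑ j ∈ Finset.range ν, (∑ l ∈ Finset.range j,
          ((Nat.choose K l : ℂ) * α ^ ((K:ℤ) - (l:ℤ)) *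
            ((-1:ℂ)^(j-l) * ((α-1)^(j-l+1))⁻¹)) • U j)
        = ∑ l ∈ Finset.range (ν-1), ∑ i ∈ Finset.range (ν-1-l),
            ((Nat.choose K l : ℂ) * α ^ ((K:ℤ) - (l:ℤ))) •
              ((((-1:ℂ)^(i+1)) / (α-1)^(i+2)) • U (l+i+1)) := by
      refine (GLSJ.tri (M := Fin d → ℂ) ν _).trans ?_
      refine Finset.sum_congr rfl fun l hl => Finset.sum_congr rfl fun i hi => ?_
      rw [smul_smul]
      congr 1
      rw [show l+i+1-l = i+1 from by omega, div_eq_mul_inv]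
    have hvec : ∑ j ∈ Finset.range ν, GLSJ.F α j K • U j
        = ((Nat.choose K (ν-1) : ℂ) * (α ^ ((K:ℤ) - (ν:ℤ) + 2) / (α - 1))) • U (ν-1)
          + (∑ l ∈ Finset.range (ν-1), ((Nat.choose K l : ℂ) * α ^ ((K:ℤ) - (l:ℤ))) •
              ((α / (α - 1)) • U l
                + ∑ i ∈ Finset.range (ν-1-l), (((-1:ℂ)^(i+1)) / (α-1)^(i+2)) • U (l+i+1)))
          + ∑ l ∈ Finset.range ν, ((-1:ℂ)^(l+1) * ((α-1)^(l+1))⁻¹) • U l := by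
      rw [Finset.sum_congr rfl hsplit, Finset.sum_add_distrib, Finset.sum_add_distrib,
        hSA, hSB]
      have hT2 : ∑ l ∈ Finset.range (ν-1), ((Nat.choose K l : ℂ) * α ^ ((K:ℤ) - (l:ℤ))) •
            ((α / (α - 1)) • U l
              + ∑ i ∈ Finset.range (ν-1-l), (((-1:ℂ)^(i+1)) / (α-1)^(i+2)) • U (l+i+1))
          = (∑ l ∈ Finset.range (ν-1),
              ((Nat.choose K l : ℂ) * α ^ ((K:ℤ) - (l:ℤ))) • ((α / (α - 1)) • U l))
            + ∑ l ∈ Finset.range (ν-1), ∑ i ∈ Finset.range (ν-1-l),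
                ((Nat.choose K l : ℂ) * α ^ ((K:ℤ) - (l:ℤ))) •
                  ((((-1:ℂ)^(i+1)) / (α-1)^(i+2)) • U (l+i+1)) := by
        rw [← Finset.sum_add_distrib]
        refine Finset.sum_congr rfl fun l _ => ?_
        rw [smul_add, Finset.smul_sum]
      rw [hT2]
      abel
    rw [hsum0, hSF, hvec]
    simp only [← Matrix.mulVecLin_apply, map_add, map_smul, map_sum]
    congr 1
    · congr 1
      · rw [hUeq (ν-1) 0 hν (by omega) (by omega)]
      · refine Finset.sum_congr rfl fun l hl => ?_
        have hl' : l < ν - 1 := Finset.mem_range.mp hl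
        rw [hUeq l (ν-l-1) (by omega) (by omega) (by omega)]
        congr 2
        refine Finset.sum_congr rfl fun i hi => ?_
        have hi' : i < ν - 1 - l := Finset.mem_range.mp hi
        rw [hUeq (l+i+1) (ν-l-i-2) (by omega) (by omega) (by omega)]
    · refine Finset.sum_congr rfl fun l hl => ?_
      have hl' : l < ν := Finset.mem_range.mp hl
      rw [hUeq l (ν-l-1) (by omega) (by omega) (by omega)]
  · intro h1
    have hS1 : ∑ j ∈ Finset.range ν, (GLSJ.S α j K) • U j
        = ∑ j ∈ Finset.range ν, ((Nat.choose (K+1) (j+1) : ℂ)) • U j :=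
      Finset.sum_congr rfl fun j _ => by rw [h1, GLSJ.S_one]
    have hr : Finset.range ν = insert (ν-1) (Finset.range (ν-1)) := by
      conv_lhs => rw [show ν = ν-1+1 from by omega]
      rw [Finset.range_add_one]
    have h1st : ∑ j ∈ Finset.range ν, ((Nat.choose K (j+1) : ℂ)) • U j
        = (Nat.choose K ν : ℂ) • U (ν-1)
          + ∑ l ∈ Finset.range (ν-1), ((Nat.choose K (l+1) : ℂ)) • U l := by
      rw [hr, Finset.sum_insert Finset.notMem_range_self,
        show ν-1+1 = ν from by omega]
    have h2nd : ∑ j ∈ Finset.range ν, ((Nat.choose K j : ℂ)) • U j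
        = U 0 + ∑ l ∈ Finset.range (ν-1), ((Nat.choose K (l+1) : ℂ)) • U (l+1) := by
      have e : ∑ j ∈ Finset.range ν, ((Nat.choose K j : ℂ)) • U j
          = ∑ j ∈ Finset.range (ν-1+1), ((Nat.choose K j : ℂ)) • U j := by
        rw [show ν-1+1 = ν from by omega]
      rw [e, Finset.sum_range_succ', Nat.choose_zero_right, Nat.cast_one, one_smul, add_comm]
    have hvec : ∑ j ∈ Finset.range ν, ((Nat.choose (K+1) (j+1) : ℂ)) • U j
        = (Nat.choose K ν : ℂ) • U (ν-1)
          + (∑ l ∈ Finset.range (ν-1), ((Nat.choose K (l+1) : ℂ)) • (U l + U (l+1)))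
          + U 0 := by
      have hp : ∀ j ∈ Finset.range ν, ((Nat.choose (K+1) (j+1) : ℂ)) • U j
          = ((Nat.choose K j : ℂ)) • U j + ((Nat.choose K (j+1) : ℂ)) • U j := by
        intro j _
        rw [Nat.choose_succ_succ, Nat.cast_add, add_smul]
      rw [Finset.sum_congr rfl hp, Finset.sum_add_distrib, h1st, h2nd]
      have hT : ∑ l ∈ Finset.range (ν-1), ((Nat.choose K (l+1) : ℂ)) • (U l + U (l+1))
          = (∑ l ∈ Finset.range (ν-1), ((Nat.choose K (l+1) : ℂ)) • U l)
            + ∑ l ∈ Finset.range (ν-1), ((Nat.choose K (l+1) : ℂ)) • U (l+1) := by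
        rw [← Finset.sum_add_distrib]
        exact Finset.sum_congr rfl fun l _ => by rw [smul_add]
      rw [hT]
      abel
    rw [hsum0, hS1, hvec]
    simp only [← Matrix.mulVecLin_apply, map_add, map_smul, map_sum]
    congr 1
    · congr 1
      · rw [hUeq (ν-1) 0 hν (by omega) (by omega)]
      · refine Finset.sum_congr rfl fun l hl => ?_
        have hl' : l < ν - 1 := Finset.mem_range.mp hl
        rw [hUeq l (ν-l-1) (by omega) (by omega) (by omega),
          hUeq (l+1) (ν-l-2) (by omega) (by omega) (by omega)]
    · rw [hstart (by omega)]
end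
end

section
/- For n ≥ 1 let w(n) denote the B-ary expansion of n written most significant digit first (no leading zero), and set w(0) to be the empty word, with A_{empty word} = I_d. For a word w = w_1…w_{K+1} of length K+1 over {0,…,B−1} (leading zeros allowed), let (w)_B = Σ_{i=1}^{K+1} w_i B^{K+1−i} be its integer value. Then for every integer N ≥ 1, setting K = ⌊log_B N⌋ (i.e. B^K ≤ N < B^{K+1}), the exact identity Σ_{n=0}^{N} A_{w(n)} C = (I_d − A_0) Σ_{k=0}^{K} Q^k C + Σ_{w of length K+1 with (w)_B ≤ N} A_w C holds. -/
open scoped Classical BigOperators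
open Filter Asymptotics

attribute [local instance] Matrix.linftyOpNormedAddCommGroup Matrix.linftyOpNormedRing

noncomputable section

/-- `A_{w(n)}`: the product of the matrices along the `B`-ary digits of `n`, most
significant digit first (empty product, i.e. the identity, for `n = 0`). -/
def digitProd {B d : ℕ} (A : Fin B → Matrix (Fin d) (Fin d) ℂ) (n : ℕ) :
    Matrix (Fin d) (Fin d) ℂ :=
  (((Nat.digits B n).reverse).map fun r => if h : r < B then A ⟨r, h⟩ else 1).prod

/-- `(w)_B = Σ_{i=1}^K w_i B^{K-i}`: the integer value of a word read most significant
digit first. -/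
def wordIntVal {B K : ℕ} (w : Fin K → Fin B) : ℕ :=
  ∑ i : Fin K, (w i : ℕ) * B ^ (K - 1 - (i : ℕ))

/-! Padding the expansion of `n < B^k` with leading zeros identifies the words of length `k`
with `0, …, B^k - 1`, so `Q^k = Σ_{n < B^k} A_0^{k-|w(n)|} A_{w(n)}`. Summing over `k ≤ K` and
exchanging the sums (this needs `B^K ≤ N`), each `n ≤ N` contributes the geometric series
`Σ_{j < K+1-|w(n)|} A_0^j A_{w(n)}`, which `I - A_0` telescopes to
`A_{w(n)} - A_0^{K+1-|w(n)|} A_{w(n)}`. The subtracted terms add up to the sum over the words of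
length `K + 1` and value at most `N` (this needs `N < B^{K+1}`). -/

section Words

variable {B : ℕ}

lemma wordIntVal_eq_finFunctionFinEquiv {K : ℕ} (w : Fin K → Fin B) :
    wordIntVal w = finFunctionFinEquiv (w ∘ Fin.rev) := by
  rw [finFunctionFinEquiv_apply, wordIntVal]
  refine Fintype.sum_equiv Fin.revPerm _ _ fun i => ?_
  simp only [Fin.revPerm_apply, Function.comp_apply, Fin.rev_rev, Fin.val_rev]
  congr 2
  omega

lemma wordIntVal_snoc {K : ℕ} (w : Fin K → Fin B) (r : Fin B) :
    wordIntVal (Fin.snoc w r : Fin (K + 1) → Fin B) = r + B * wordIntVal w := by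
  simp only [wordIntVal, Fin.sum_univ_castSucc, Fin.snoc_castSucc, Fin.snoc_last,
    Fin.val_castSucc, Fin.val_last, Nat.add_sub_cancel, Nat.sub_self, pow_zero, mul_one,
    Finset.mul_sum]
  rw [add_comm]
  refine congrArg _ (Finset.sum_congr rfl fun i _ => ?_)
  rw [show K - i = K - 1 - i + 1 by omega, pow_succ]
  ring

lemma sum_wordIntVal {M : Type*} [AddCommMonoid M] (K : ℕ) (f : ℕ → M) :
    ∑ w : Fin K → Fin B, f (wordIntVal w) = ∑ n ∈ Finset.range (B ^ K), f n := by
  rw [← Fin.sum_univ_eq_sum_range]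
  simp only [wordIntVal_eq_finFunctionFinEquiv]
  exact Fintype.sum_equiv ((Equiv.arrowCongr Fin.revPerm (Equiv.refl _)).trans
    finFunctionFinEquiv) _ _ fun w => rfl

end Words

section Products

variable {B d : ℕ} (A : Fin B → Matrix (Fin d) (Fin d) ℂ)

lemma wordProd_snoc {K : ℕ} (w : Fin K → Fin B) (r : Fin B) :
    wordProd A (Fin.snoc w r : Fin (K + 1) → Fin B) = wordProd A w * A r := by
  rw [wordProd, wordProd, List.ofFn_succ']
  simp

lemma sum_pow_eq_sum_wordProd (K : ℕ) :
    (∑ r, A r) ^ K = ∑ w : Fin K → Fin B, wordProd A w := by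
  induction K with
  | zero => simp [wordProd]
  | succ K ih =>
    rw [pow_succ, ih, Finset.sum_mul_sum, ← (Fin.snocEquiv fun _ => Fin B).sum_comp,
      Fintype.sum_prod_type, Finset.sum_comm]
    exact Finset.sum_congr rfl fun r _ =>
      Finset.sum_congr rfl fun w _ => (wordProd_snoc A w r).symm

/-- `A_{0^{K-|w(n)|} w(n)}`: the expansion of `n` padded with leading zeros to length `K`. -/
def paddedDigitProd [NeZero B] (K n : ℕ) : Matrix (Fin d) (Fin d) ℂ :=
  A 0 ^ (K - (Nat.digits B n).length) * digitProd A n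

variable {A} (hB : 1 < B)
include hB

lemma digitProd_add_mul {r : ℕ} (hr : r < B) (n : ℕ) (hrn : r ≠ 0 ∨ n ≠ 0) :
    digitProd A (r + B * n) = digitProd A n * A ⟨r, hr⟩ := by
  simp [digitProd, Nat.digits_add B hB r n hr hrn, hr]

variable [NeZero B]

lemma paddedDigitProd_succ_add_mul (K : ℕ) {r : ℕ} (hr : r < B) (n : ℕ) :
    paddedDigitProd A (K + 1) (r + B * n) = paddedDigitProd A K n * A ⟨r, hr⟩ := by
  by_cases hrn : r = 0 ∧ n = 0
  · obtain ⟨rfl, rfl⟩ := hrn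
    simp [paddedDigitProd, digitProd, pow_succ]
  · rw [paddedDigitProd, paddedDigitProd, Nat.digits_add B hB r n hr (by tauto),
      digitProd_add_mul hB hr n (by tauto), List.length_cons, Nat.add_sub_add_right, mul_assoc]

lemma wordProd_eq_paddedDigitProd {K : ℕ} (w : Fin K → Fin B) :
    wordProd A w = paddedDigitProd A K (wordIntVal w) := by
  induction w using Fin.snocInduction with
  | elim0 => simp [wordProd, wordIntVal, paddedDigitProd, digitProd]
  | snoc w r ih =>
    rw [wordProd_snoc, wordIntVal_snoc, paddedDigitProd_succ_add_mul hB _ r.isLt, ih]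

lemma sum_pow_eq_sum_paddedDigitProd (K : ℕ) :
    (∑ r, A r) ^ K = ∑ n ∈ Finset.range (B ^ K), paddedDigitProd A K n := by
  simp only [sum_pow_eq_sum_wordProd, wordProd_eq_paddedDigitProd hB, sum_wordIntVal]

lemma sum_wordProd_ite_wordIntVal_le {K N : ℕ} (hN : N < B ^ K) :
    ∑ w : Fin K → Fin B, (if wordIntVal w ≤ N then wordProd A w else 0) =
      ∑ n ∈ Finset.range (N + 1), paddedDigitProd A K n := by
  simp only [wordProd_eq_paddedDigitProd hB, sum_wordIntVal (f := fun n => if n ≤ N then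
    paddedDigitProd A K n else 0), ← Finset.sum_filter]
  congr 1
  ext n
  simp only [Finset.mem_filter, Finset.mem_range]
  omega

omit hB in
lemma one_sub_mul_sum_paddedDigitProd (K n : ℕ) :
    (1 - A 0) * ∑ k ∈ Finset.Ico (Nat.digits B n).length K, paddedDigitProd A k n =
      digitProd A n - paddedDigitProd A K n := by
  simp only [Finset.sum_Ico_eq_sum_range, paddedDigitProd, Nat.add_sub_cancel_left]
  rw [← Finset.sum_mul, ← mul_assoc, mul_neg_geom_sum, sub_mul, one_mul]

lemma sum_range_digitProd {K N : ℕ} (hK : B ^ K ≤ N) :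
    ∑ n ∈ Finset.range (N + 1), digitProd A n =
      (1 - A 0) * ∑ k ∈ Finset.range (K + 1), (∑ r, A r) ^ k +
        ∑ n ∈ Finset.range (N + 1), paddedDigitProd A (K + 1) n := by
  have hswap :
      ∑ k ∈ Finset.range (K + 1), ∑ n ∈ Finset.range (B ^ k), paddedDigitProd A k n =
      ∑ n ∈ Finset.range (N + 1),
        ∑ k ∈ Finset.Ico (Nat.digits B n).length (K + 1), paddedDigitProd A k n := by
    refine Finset.sum_comm' fun k n => ?_
    simp only [Finset.mem_range, Finset.mem_Ico, Nat.digits_length_le_iff hB]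
    constructor
    · rintro ⟨hk, hn⟩
      have := Nat.pow_le_pow_right hB.le (Nat.lt_succ_iff.1 hk)
      omega
    · tauto
  simp only [sum_pow_eq_sum_paddedDigitProd hB, hswap]
  rw [Finset.mul_sum, Finset.sum_congr rfl fun n _ => one_sub_mul_sum_paddedDigitProd _ n,
    Finset.sum_sub_distrib, sub_add_cancel]

end Products

/-- splitting of the running sum `Σ_{n=0}^N A_{w(n)} C` for
`B^K ≤ N < B^{K+1}`. -/
theorem runSum_integer_split (B d : ℕ) (hB : 2 ≤ B)
    (A : Fin B → Matrix (Fin d) (Fin d) ℂ) (C : Fin d → ℂ)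
    (N K : ℕ) (hK1 : B ^ K ≤ N) (hK2 : N < B ^ (K + 1)) :
    ∑ n ∈ Finset.range (N + 1), (digitProd A n).mulVec C =
      ((1 : Matrix (Fin d) (Fin d) ℂ) - A ⟨0, by omega⟩).mulVec
          (∑ k ∈ Finset.range (K + 1), ((∑ r, A r) ^ k).mulVec C) +
        ∑ w : Fin (K + 1) → Fin B,
          if wordIntVal w ≤ N then (wordProd A w).mulVec C else 0 := by
  have : NeZero B := ⟨by omega⟩
  have hwords := congrArg (Matrix.mulVec · C) (sum_wordProd_ite_wordIntVal_le (A := A) hB hK2)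
  simp only [Matrix.sum_mulVec, apply_ite (Matrix.mulVec · C), Matrix.zero_mulVec] at hwords
  rw [hwords, ← Matrix.sum_mulVec, ← Matrix.sum_mulVec, ← Matrix.sum_mulVec,
    Matrix.mulVec_mulVec, ← Matrix.add_mulVec, sum_range_digitProd hB hK1]
  -- `⟨0, _⟩` and the `NeZero` literal `0 : Fin B` agree definitionally
  rfl
end
end

section
/- Let B ≥ 2 and let u : ℕ → ℂ be a B-rational (B-regular) sequence, i.e. the ℂ-subspace of the space of sequences ℕ → ℂ spanned by the family {n ↦ u(B^k n + r) : k ∈ ℕ, 0 ≤ r < B^k} is finite-dimensional and nonzero. Then u admits a linear representation insensitive to the leftmost zeroes: there exist d ≥ 1, a row vector L ∈ ℂ^{1×d}, matrices A_0, …, A_{B−1} ∈ Matrix (Fin d) (Fin d) ℂ, and a column vector C ∈ ℂ^d, such that L·A_0 = L and for every n ∈ ℕ and every word n_{K−1} … n_1 n_0 over {0,…,B−1} with n = Σ_{i=0}^{K−1} n_i B^i (leading zeros allowed), one has u(n) = L · A_{n_{K−1}} ⋯ A_{n_1} A_{n_0} · C; in particular u(0) = L·C and the value is independent of the number of leading zeros.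 -/
/-!
The span `V` of the `B`-kernel of `u` is stable under the digit shifts
`v ↦ (n ↦ v (B * n + j))`, so in a basis of `V` these shifts become matrices `A j`, evaluation
at `0` becomes the row vector `L`, and `u` becomes a coordinate vector `C`. Since
`v (B * m + n₀) = (shift n₀ v) m`, peeling off digits from the least significant one gives
`u n = L A_{n_{K-1}} ⋯ A_{n_0} C`. Leading zeros are harmless because the shift by the digit `0`
does not move the value at `0`, which is `L A_0 = L`.
-/

open Matrix

section BasisRepresentation

variable {R V ι : Type*} [CommRing R] [AddCommGroup V] [Module R V] [Fintype ι]

theorem LinearMap.apply_eq_dotProduct_repr (b : Module.Basis ι R V) (φ : V →ₗ[R] R) (v : V) :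
    φ v = (fun i => φ (b i)) ⬝ᵥ b.repr v := by
  conv_lhs => rw [← b.sum_repr v]
  simp only [map_sum, map_smul, smul_eq_mul, dotProduct, mul_comm]

theorem LinearMap.vecMul_toMatrixAlgEquiv [DecidableEq ι] (b : Module.Basis ι R V)
    (φ : V →ₗ[R] R) (f : Module.End R V) :
    (fun i => φ (b i)) ᵥ* LinearMap.toMatrixAlgEquiv b f = fun j => φ (f (b j)) := by
  ext j
  rw [φ.apply_eq_dotProduct_repr b]
  simp only [vecMul, dotProduct, LinearMap.toMatrixAlgEquiv_apply]

theorem LinearMap.apply_list_prod_eq_dotProduct [DecidableEq ι] (b : Module.Basis ι R V)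
    (φ : V →ₗ[R] R) (l : List (Module.End R V)) (v : V) :
    φ (l.prod v) =
      (fun i => φ (b i)) ⬝ᵥ ((l.map (LinearMap.toMatrixAlgEquiv b)).prod *ᵥ b.repr v) := by
  rw [← map_list_prod, φ.apply_eq_dotProduct_repr b]
  exact congrArg _ (LinearMap.toMatrix_mulVec_repr b b l.prod v).symm

end BasisRepresentation

section RadixKernel

variable {R : Type*} [CommRing R]

def radixKernel (B : ℕ) (u : ℕ → R) : Submodule R (ℕ → R) :=
  Submodule.span R {v | ∃ k r : ℕ, r < B ^ k ∧ v = fun n => u (B ^ k * n + r)}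

theorem self_mem_radixKernel (B : ℕ) (u : ℕ → R) : u ∈ radixKernel B u :=
  Submodule.subset_span ⟨0, 0, Nat.one_pos, by simp⟩

def digitShift (B j : ℕ) : (ℕ → R) →ₗ[R] (ℕ → R) :=
  LinearMap.funLeft R R fun n => B * n + j

theorem radixKernel_le_comap_digitShift {B j : ℕ} (hj : j < B) (u : ℕ → R) :
    radixKernel B u ≤ (radixKernel B u).comap (digitShift B j) := by
  refine Submodule.span_le.mpr ?_
  rintro _ ⟨k, r, hr, rfl⟩
  refine Submodule.subset_span ⟨k + 1, j * B ^ k + r, ?_, ?_⟩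
  · calc j * B ^ k + r < (j + 1) * B ^ k := by linarith
      _ ≤ B ^ (k + 1) := by rw [pow_succ']; exact Nat.mul_le_mul_right _ hj
  · funext n
    simp only [digitShift, LinearMap.funLeft_apply]
    congr 1
    ring

def radixKernelShift (B : ℕ) (u : ℕ → R) (j : Fin B) : Module.End R (radixKernel B u) :=
  (digitShift B j).restrict (radixKernel_le_comap_digitShift j.2 u)

@[simp]
theorem radixKernelShift_apply {B : ℕ} {u : ℕ → R} (j : Fin B) (v : radixKernel B u)
    (n : ℕ) :
    (radixKernelShift B u j v : ℕ → R) n = (v : ℕ → R) (B * n + j) :=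
  rfl

theorem Fin.sum_digits_succ {B K : ℕ} (w : Fin (K + 1) → ℕ) :
    ∑ i : Fin (K + 1), w i * B ^ (i : ℕ) =
      w 0 + B * ∑ i : Fin K, w i.succ * B ^ (i : ℕ) := by
  rw [Fin.sum_univ_succ, Finset.mul_sum]
  simp only [Fin.val_zero, pow_zero, mul_one, Fin.val_succ, pow_succ]
  congr 1
  exact Finset.sum_congr rfl fun i _ => by ring

theorem radixKernel_apply_digits {B : ℕ} {u : ℕ → R} {K : ℕ} (w : Fin K → Fin B)
    (v : radixKernel B u) :
    (v : ℕ → R) (∑ i : Fin K, (w i : ℕ) * B ^ (i : ℕ)) =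
      (((List.ofFn w).map (radixKernelShift B u)).reverse.prod v : ℕ → R) 0 := by
  induction K generalizing v with
  | zero => simp
  | succ K ih =>
    rw [Fin.sum_digits_succ, add_comm, ← radixKernelShift_apply, ih, List.ofFn_succ]
    simp [Module.End.mul_apply]

end RadixKernel

/-- every nonzero `B`-rational (B-regular) sequence admits a linear
representation insensitive to the leftmost zeroes: `L A_0 = L` and, for every way of
writing `n` with digits `n_{K-1} … n_0` (leading zeros allowed),
`u(n) = L A_{n_{K-1}} ⋯ A_{n_0} C`. -/
theorem radixRational_insensitive_representation (B : ℕ) (hB : 2 ≤ B) (u : ℕ → ℂ)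
    (hfd : FiniteDimensional ℂ (Submodule.span ℂ
      {v : ℕ → ℂ | ∃ k r : ℕ, r < B ^ k ∧ v = fun n => u (B ^ k * n + r)}))
    (hne : Submodule.span ℂ
      {v : ℕ → ℂ | ∃ k r : ℕ, r < B ^ k ∧ v = fun n => u (B ^ k * n + r)} ≠ ⊥) :
    ∃ (d : ℕ) (_ : 1 ≤ d) (L : Fin d → ℂ) (A : Fin B → Matrix (Fin d) (Fin d) ℂ)
      (C : Fin d → ℂ),
      Matrix.vecMul L (A ⟨0, by omega⟩) = L ∧
      (∀ (K : ℕ) (w : Fin K → Fin B) (n : ℕ),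
        n = ∑ i : Fin K, (w i : ℕ) * B ^ (i : ℕ) →
        u n = dotProduct L
          ((((List.ofFn w).map A).reverse.prod).mulVec C)) ∧
      u 0 = dotProduct L C := by
  have : FiniteDimensional ℂ (radixKernel B u) := hfd
  have : Nontrivial (radixKernel B u) := Submodule.nontrivial_iff_ne_bot.mpr hne
  let b := Module.finBasis ℂ (radixKernel B u)
  let φ := (LinearMap.proj 0).comp (radixKernel B u).subtype
  let U : radixKernel B u := ⟨u, self_mem_radixKernel B u⟩
  refine ⟨_, Module.finrank_pos, fun i => φ (b i),
    fun j => LinearMap.toMatrixAlgEquiv b (radixKernelShift B u j), b.repr U, ?_, ?_, ?_⟩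
  · rw [φ.vecMul_toMatrixAlgEquiv b]
    funext j
    simp [φ]
  · rintro K w n rfl
    have h := φ.apply_list_prod_eq_dotProduct b
      ((List.ofFn w).map (radixKernelShift B u)).reverse U
    rw [List.map_reverse, List.map_map] at h
    exact (radixKernel_apply_digits w U).trans h
  · exact φ.apply_eq_dotProduct_repr b U
end

section
/- Let B = 2, d = 2, and work over ℝ with A_0 = R_{−π/3} and A_1 = R_{π/3}, where R_θ is the 2×2 rotation matrix ((cos θ, −sin θ), (sin θ, cos θ)), and C = e_1 = (1,0)^T. For K ≥ 0 set y_{2K} = Σ_{j=1}^{K} 4^{−j} (binary expansion (0.(01)^K)_2) and x_{2K+2} = 3/4 + y_{2K}/4 (binary expansion (0.11(01)^K)_2). Then the running sums satisfy S_{2K}(y_{2K}) = K · R_{−2π/3} e_1 + e_1 and S_{2K+2}(x_{2K+2}) = (K+1) · e_1. In particular sup_{x∈[0,1]} ‖S_K(x)‖ ≥ ⌊K/2⌋, so for this representation (whose matrices are orthogonal, hence satisfy ‖A_w‖ = 1 for all words w in the Euclidean operator norm) the running sums grow linearly in K, showing that the bound O(K λ^K) of the noise lemma (with λ = 1) has the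 right order of growth. -/
open scoped Classical BigOperators

noncomputable section

/-- The rotation matrix of angle `θ`. -/
def Rot (θ : ℝ) : Matrix (Fin 2) (Fin 2) ℝ :=
  !![Real.cos θ, -Real.sin θ; Real.sin θ, Real.cos θ]

/-- `A_w = A_{w_1} ⋯ A_{w_K}` for a word `w` over the binary alphabet (real matrices). -/
def wordProdR {B d : ℕ} (A : Fin B → Matrix (Fin d) (Fin d) ℝ) {K : ℕ}
    (w : Fin K → Fin B) : Matrix (Fin d) (Fin d) ℝ :=
  ((List.ofFn w).map A).prod

/-- `(0.w)_B = Σ_{k=1}^K w_k B^{-k}`. -/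
def wordValR {B K : ℕ} (w : Fin K → Fin B) : ℝ :=
  ∑ k : Fin K, (w k : ℝ) / (B : ℝ) ^ ((k : ℕ) + 1)

/-- The running sum `S_K(x) = Σ_{|w|=K, (0.w)_B ≤ x} A_w C` (real case). -/
def runSumR {B d : ℕ} (A : Fin B → Matrix (Fin d) (Fin d) ℝ) (C : Fin d → ℝ)
    (K : ℕ) (x : ℝ) : Fin d → ℝ :=
  ∑ w : Fin K → Fin B, if wordValR w ≤ x then (wordProdR A w).mulVec C else 0

/-- The Euclidean norm on `ℝ²`. -/
def eucNorm (v : Fin 2 → ℝ) : ℝ :=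
  Real.sqrt (v 0 ^ 2 + v 1 ^ 2)

/-!
Splitting off the first digit gives `S_{K+1}(x) = A₀ S_K(2x) + A₁ S_K(2x - 1)`, where `S_K`
vanishes left of `0` and equals `(A₀ + A₁)^K C = C` right of `1`, because
`A₀ + A₁ = 2 cos(π/3) • 1 = 1`. Hence prepending the digits `01` to the point turns `S_K(y)` into
`A₀²C + A₀A₁ S_K(y) = R_{-2π/3} e₁ + S_K(y)`: a fixed vector is added at every step. Prepending `11`
instead applies `A₁² = R_{2π/3}`, which rotates the accumulated `K R_{-2π/3} e₁` onto `K e₁`, and the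
remaining terms cancel. Odd lengths follow by prepending a `0`, which acts by the isometry `A₀`.
-/

open Matrix Real Finset

section RunningSum

variable {B d : ℕ} (A : Fin B → Matrix (Fin d) (Fin d) ℝ) (C : Fin d → ℝ)

lemma wordValR_nonneg {K : ℕ} (w : Fin K → Fin B) : 0 ≤ wordValR w :=
  sum_nonneg fun _ _ => by positivity

lemma wordValR_cons {K : ℕ} (b : Fin B) (v : Fin K → Fin B) :
    wordValR (Fin.cons b v : Fin (K + 1) → Fin B) = (b + wordValR v) / B := by
  simp only [wordValR, Fin.sum_univ_succ, Fin.cons_zero, Fin.cons_succ, Fin.val_zero, Fin.val_succ,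
    pow_zero, one_mul, add_div, sum_div, div_div, pow_succ]

lemma wordProdR_cons {K : ℕ} (b : Fin B) (v : Fin K → Fin B) :
    wordProdR A (Fin.cons b v : Fin (K + 1) → Fin B) = A b * wordProdR A v := by
  simp [wordProdR, List.ofFn_succ]

lemma runSumR_zero_of_nonneg {x : ℝ} (hx : 0 ≤ x) : runSumR A C 0 x = C := by
  simp [runSumR, wordValR, wordProdR, hx]

lemma runSumR_of_neg (K : ℕ) {x : ℝ} (hx : x < 0) : runSumR A C K x = 0 :=
  sum_eq_zero fun w _ => if_neg (by linarith [wordValR_nonneg w])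

lemma runSumR_succ (K : ℕ) (x : ℝ) :
    runSumR A C (K + 1) x = ∑ b, A b *ᵥ runSumR A C K (B * x - b) := by
  rw [runSumR, ← (Fin.consEquiv fun _ => Fin B).sum_comp, Fintype.sum_prod_type]
  refine sum_congr rfl fun b _ => ?_
  have hB : (0 : ℝ) < B := by exact_mod_cast b.pos
  rw [runSumR, mulVec_sum]
  refine sum_congr rfl fun v _ => ?_
  change (if wordValR (Fin.cons b v : Fin (K + 1) → Fin B) ≤ x then
    wordProdR A (Fin.cons b v : Fin (K + 1) → Fin B) *ᵥ C else 0) = _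
  simp only [wordValR_cons, wordProdR_cons, div_le_iff₀ hB, le_sub_iff_add_le', mul_comm x,
    ← mulVec_mulVec]
  split_ifs <;> simp

lemma runSumR_of_one_le (K : ℕ) {x : ℝ} (hx : 1 ≤ x) :
    runSumR A C K x = (∑ b, A b) ^ K *ᵥ C := by
  induction K generalizing x with
  | zero => simp [runSumR_zero_of_nonneg A C (zero_le_one.trans hx)]
  | succ K ih =>
    have hshift (b : Fin B) : 1 ≤ B * x - b := by
      have : (b : ℝ) + 1 ≤ B := by exact_mod_cast b.isLt
      nlinarith
    simp only [runSumR_succ, ih (hshift _), pow_succ', ← mulVec_mulVec, sum_mulVec]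

end RunningSum

section BinaryRunningSum

variable {d : ℕ} (A : Fin 2 → Matrix (Fin d) (Fin d) ℝ) (C : Fin d → ℝ)

lemma runSumR_succ_div_two (K : ℕ) {y : ℝ} (hy : y < 1) :
    runSumR A C (K + 1) (y / 2) = A 0 *ᵥ runSumR A C K y := by
  rw [runSumR_succ, Fin.sum_univ_two]
  simp only [Fin.val_zero, Fin.val_one, Nat.cast_ofNat, Nat.cast_zero, Nat.cast_one, sub_zero,
    mul_div_cancel₀ y two_ne_zero, runSumR_of_neg A C K (sub_neg.2 hy), mulVec_zero, add_zero]

lemma runSumR_succ_one_add_div_two (K : ℕ) {y : ℝ} (hy : 0 ≤ y) :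
    runSumR A C (K + 1) ((1 + y) / 2) =
      A 0 *ᵥ ((A 0 + A 1) ^ K *ᵥ C) + A 1 *ᵥ runSumR A C K y := by
  rw [runSumR_succ, Fin.sum_univ_two]
  simp only [Fin.val_zero, Fin.val_one, Nat.cast_ofNat, Nat.cast_zero, Nat.cast_one, sub_zero,
    mul_div_cancel₀ (1 + y) two_ne_zero, add_sub_cancel_left,
    runSumR_of_one_le A C K (le_add_of_nonneg_right hy), Fin.sum_univ_two]

end BinaryRunningSum

section Rotation

lemma Rot_add (a b : ℝ) : Rot (a + b) = Rot a * Rot b := by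
  ext i j
  fin_cases i <;> fin_cases j <;>
    simp [Rot, mul_apply, Fin.sum_univ_two, cos_add, sin_add] <;> ring

lemma Rot_zero : Rot 0 = 1 := by
  ext i j
  fin_cases i <;> fin_cases j <;> simp [Rot]

lemma Rot_add_pi (θ : ℝ) : Rot (θ + π) = -Rot θ := by
  ext i j
  fin_cases i <;> fin_cases j <;> simp [Rot]

lemma Rot_neg_add_Rot (θ : ℝ) : Rot (-θ) + Rot θ = (2 * cos θ) • 1 := by
  ext i j
  fin_cases i <;> fin_cases j <;> simp [Rot] <;> ring

lemma Rot_mulVec_Rot_mulVec (a b : ℝ) (v : Fin 2 → ℝ) :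
    Rot a *ᵥ (Rot b *ᵥ v) = Rot (a + b) *ᵥ v := by
  rw [mulVec_mulVec, Rot_add]

lemma eucNorm_Rot_mulVec (θ : ℝ) (v : Fin 2 → ℝ) : eucNorm (Rot θ *ᵥ v) = eucNorm v := by
  simp only [eucNorm, Rot, mulVec, dotProduct, Fin.sum_univ_two, of_apply, cons_val', cons_val_zero,
    cons_val_one, empty_val', cons_val_fin_one]
  congr 1
  linear_combination (v 0 ^ 2 + v 1 ^ 2) * sin_sq_add_cos_sq θ

end Rotation

lemma eucNorm_eq_norm (v : Fin 2 → ℝ) : eucNorm v = ‖WithLp.toLp 2 v‖ := by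
  simp [eucNorm, EuclideanSpace.norm_eq, Fin.sum_univ_two]

lemma eucNorm_smul_e₁ {c : ℝ} (hc : 0 ≤ c) : eucNorm (c • ![1, 0]) = c := by
  simp [eucNorm, sqrt_sq hc]

lemma le_iSup_eucNorm_runSumR (A : Fin 2 → Matrix (Fin 2) (Fin 2) ℝ) (C : Fin 2 → ℝ) (K : ℕ)
    {z : ℝ} (hz : z ∈ Set.Icc (0 : ℝ) 1) :
    eucNorm (runSumR A C K z) ≤ ⨆ z : Set.Icc (0 : ℝ) 1, eucNorm (runSumR A C K z) := by
  refine le_ciSup (f := fun z : Set.Icc (0 : ℝ) 1 => eucNorm (runSumR A C K z))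
    ⟨∑ w : Fin K → Fin 2, ‖WithLp.toLp 2 (wordProdR A w *ᵥ C)‖, ?_⟩ ⟨z, hz⟩
  rintro _ ⟨z, rfl⟩
  simp only [eucNorm_eq_norm, runSumR, WithLp.toLp_sum]
  refine (norm_sum_le _ _).trans (sum_le_sum fun w _ => ?_)
  split_ifs <;> simp

section TriangularTiling

def triangularRep : Fin 2 → Matrix (Fin 2) (Fin 2) ℝ := ![Rot (-(π / 3)), Rot (π / 3)]

/-- The binary number `(0.(01)^K)₂`. -/
def zeroOneRepeat (K : ℕ) : ℝ := ∑ j ∈ range K, ((1 : ℝ) / 4) ^ (j + 1)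

lemma zeroOneRepeat_succ (K : ℕ) : zeroOneRepeat (K + 1) = (1 + zeroOneRepeat K) / 4 := by
  simp only [zeroOneRepeat, sum_range_succ', pow_succ _ (_ + 1), ← sum_mul]
  ring

lemma zeroOneRepeat_mem_Icc (K : ℕ) : zeroOneRepeat K ∈ Set.Icc (0 : ℝ) (1 / 3) := by
  induction K with
  | zero => simp [zeroOneRepeat]
  | succ K ih =>
    rw [zeroOneRepeat_succ]
    constructor <;> linarith [ih.1, ih.2]

lemma triangularRep_zero : triangularRep 0 = Rot (-(π / 3)) := rfl

lemma triangularRep_add : triangularRep 0 + triangularRep 1 = 1 := by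
  simp [triangularRep, Rot_neg_add_Rot, cos_pi_div_three]

lemma runSumR_triangularRep_one_add_div_four (K : ℕ) {y : ℝ} (hy : y ∈ Set.Ico (0 : ℝ) 1) :
    runSumR triangularRep ![1, 0] (K + 2) ((1 + y) / 4) =
      Rot (-(2 * π / 3)) *ᵥ ![1, 0] + runSumR triangularRep ![1, 0] K y := by
  rw [show (1 + y) / 4 = (1 + y) / 2 / 2 by ring, runSumR_succ_div_two _ _ _ (by linarith [hy.2]),
    runSumR_succ_one_add_div_two _ _ _ hy.1, triangularRep_add, one_pow, one_mulVec]
  simp only [triangularRep, cons_val_zero, cons_val_one, mulVec_add, Rot_mulVec_Rot_mulVec]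
  rw [show -(π / 3) + -(π / 3) = -(2 * π / 3) by ring, neg_add_cancel, Rot_zero, one_mulVec]

lemma runSumR_triangularRep_three_add_div_four (K : ℕ) {y : ℝ} (hy : 0 ≤ y) :
    runSumR triangularRep ![1, 0] (K + 2) ((3 + y) / 4) =
      Rot (-(π / 3)) *ᵥ ![1, 0] + ![1, 0] + Rot (2 * π / 3) *ᵥ runSumR triangularRep ![1, 0] K y := by
  rw [show (3 + y) / 4 = (1 + (1 + y) / 2) / 2 by ring,
    runSumR_succ_one_add_div_two _ _ _ (by positivity), runSumR_succ_one_add_div_two _ _ _ hy,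
    triangularRep_add, one_pow, one_pow, one_mulVec]
  simp only [triangularRep, cons_val_zero, cons_val_one, mulVec_add, Rot_mulVec_Rot_mulVec]
  rw [show π / 3 + -(π / 3) = 0 by ring, Rot_zero, one_mulVec, add_assoc,
    show π / 3 + π / 3 = 2 * π / 3 by ring]

lemma runSumR_triangularRep_zeroOneRepeat (K : ℕ) :
    runSumR triangularRep ![1, 0] (2 * K) (zeroOneRepeat K) =
      (K : ℝ) • Rot (-(2 * π / 3)) *ᵥ ![1, 0] + ![1, 0] := by
  induction K with
  | zero => simp [zeroOneRepeat, runSumR_zero_of_nonneg]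
  | succ K ih =>
    obtain ⟨h0, h1⟩ := zeroOneRepeat_mem_Icc K
    rw [zeroOneRepeat_succ, mul_add_one,
      runSumR_triangularRep_one_add_div_four _ ⟨h0, by linarith⟩, ih]
    push_cast
    module

lemma runSumR_triangularRep_three_add_zeroOneRepeat (K : ℕ) :
    runSumR triangularRep ![1, 0] (2 * K + 2) (3 / 4 + zeroOneRepeat K / 4) =
      ((K : ℝ) + 1) • ![1, 0] := by
  have hrot : Rot (2 * π / 3) *ᵥ ![1, 0] = -(Rot (-(π / 3)) *ᵥ ![1, 0]) := by
    rw [show 2 * π / 3 = -(π / 3) + π by ring, Rot_add_pi, neg_mulVec]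
  rw [show 3 / 4 + zeroOneRepeat K / 4 = (3 + zeroOneRepeat K) / 4 by ring,
    runSumR_triangularRep_three_add_div_four _ (zeroOneRepeat_mem_Icc K).1,
    runSumR_triangularRep_zeroOneRepeat, mulVec_add, mulVec_smul, Rot_mulVec_Rot_mulVec,
    show 2 * π / 3 + -(2 * π / 3) = 0 by ring, Rot_zero, one_mulVec, hrot]
  module

lemma exists_mem_Icc_half_le_eucNorm_runSumR_triangularRep (K : ℕ) :
    ∃ z ∈ Set.Icc (0 : ℝ) 1, ((K / 2 : ℕ) : ℝ) ≤ eucNorm (runSumR triangularRep ![1, 0] K z) := by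
  match K with
  | 0 | 1 => exact ⟨0, by simp, by simp [eucNorm]⟩
  | K + 2 =>
    obtain ⟨n, hK⟩ := Nat.even_or_odd' K
    obtain ⟨h0, h1⟩ := zeroOneRepeat_mem_Icc n
    have hnorm : eucNorm (runSumR triangularRep ![1, 0] (2 * n + 2)
        (3 / 4 + zeroOneRepeat n / 4)) = n + 1 := by
      rw [runSumR_triangularRep_three_add_zeroOneRepeat, eucNorm_smul_e₁ (by positivity)]
    rcases hK with rfl | rfl
    · refine ⟨3 / 4 + zeroOneRepeat n / 4, ⟨by positivity, by linarith⟩, ?_⟩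
      rw [show (2 * n + 2) / 2 = n + 1 by omega]
      exact_mod_cast hnorm.ge
    · refine ⟨(3 / 4 + zeroOneRepeat n / 4) / 2, ⟨by positivity, by linarith⟩, ?_⟩
      rw [show (2 * n + 1 + 2) / 2 = n + 1 by omega, show 2 * n + 1 + 2 = 2 * n + 2 + 1 by ring,
        runSumR_succ_div_two _ _ _ (by linarith), triangularRep_zero, eucNorm_Rot_mulVec]
      exact_mod_cast hnorm.ge

end TriangularTiling

/-- triangular tiling example: for `B = 2`, `A_0 = R_{-π/3}`,
`A_1 = R_{π/3}`, `C = e₁`, the running sums evaluated at `y_{2K} = (0.(01)^K)_2`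
and `x_{2K+2} = (0.11(01)^K)_2` grow linearly in `K`, so
`sup_{x ∈ [0,1]} ‖S_K(x)‖ ≥ ⌊K/2⌋`. -/
theorem triangular_tiling_noise_growth (A : Fin 2 → Matrix (Fin 2) (Fin 2) ℝ)
    (hA0 : A 0 = Rot (-(Real.pi / 3))) (hA1 : A 1 = Rot (Real.pi / 3))
    (C : Fin 2 → ℝ) (hC : C = ![1, 0])
    (y : ℕ → ℝ) (hy : ∀ K, y K = ∑ j ∈ Finset.range K, ((1 : ℝ) / 4) ^ (j + 1))
    (x : ℕ → ℝ) (hx : ∀ K, x K = 3 / 4 + y K / 4) :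
    (∀ K : ℕ, runSumR A C (2 * K) (y K) =
        (K : ℝ) • (Rot (-(2 * Real.pi / 3))).mulVec ![1, 0] + ![1, 0]) ∧
    (∀ K : ℕ, runSumR A C (2 * K + 2) (x K) =
        ((K : ℝ) + 1) • (![1, 0] : Fin 2 → ℝ)) ∧
    (∀ K : ℕ, ((K / 2 : ℕ) : ℝ) ≤ ⨆ z : Set.Icc (0:ℝ) 1, eucNorm (runSumR A C K z)) := by
  obtain rfl : A = triangularRep := funext fun i => by fin_cases i <;> assumption
  obtain rfl : y = zeroOneRepeat := funext hy
  obtain rfl : x = fun K => 3 / 4 + zeroOneRepeat K / 4 := funext hx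
  subst hC
  refine ⟨runSumR_triangularRep_zeroOneRepeat, runSumR_triangularRep_three_add_zeroOneRepeat,
    fun K => ?_⟩
  obtain ⟨z, hz, hle⟩ := exists_mem_Icc_half_le_eucNorm_runSumR_triangularRep K
  exact hle.trans (le_iSup_eucNorm_runSumR _ _ K hz)
end
end
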